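/- If cantor(ℕ^ℕ) holds (every nonmeager subset of Baire space has nonmeager intersection with some nowhere dense Cantor set, relative to that Cantor set), then cantor(X) holds for every perfect Polish space X. -/

import Mathlib

def PerfectProp (X : Type*) [TopologicalSpace X] : Prop :=
  ∀ A : Set X, ¬ IsMeagre A →
    ∃ P : Set X, IsNowhereDense P ∧ Perfect P ∧ P.Nonempty ∧
      ¬ IsMeagre ((↑) ⁻¹' A : Set P)

def CantorProp (X : Type*) [TopologicalSpace X] : Prop :=
  ∀ A : Set X, ¬ IsMeagre A →
    ∃ C : Set X, IsNowhereDense C ∧ Nonempty (C ≃ₜ (ℕ → Bool)) ∧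
      ¬ IsMeagre ((↑) ⁻¹' A : Set C)

/-!
A perfect Polish space `X` contains a comeagre copy of Baire space: a Lusin scheme of open sets
with vanishing diameters, in which the children of every set are dense in it, induces an
embedding `(ℕ → ℕ) → X` whose range contains the dense `G_δ` set of points lying on some branch
at every level. Such an embedding transports the Cantor property: preimages of nonmeagre sets
are nonmeagre because the range is comeagre, and images of nowhere dense and meagre sets under an
embedding keep these properties.
-/

open Set Filter Topology Function PiNat
open scoped ENNReal

section Transfer

variable {X Y : Type*} [TopologicalSpace X] [TopologicalSpace Y] {f : X → Y}

theorem Topology.IsInducing.not_isMeagre_preimage (hf : IsInducing f)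
    (hrange : IsMeagre (range f)ᶜ) {A : Set Y} (hA : ¬IsMeagre A) : ¬IsMeagre (f ⁻¹' A) :=
  fun h ↦ hA <| ((hf.isMeagre_image h).union hrange).mono fun y hy ↦ by
    by_cases hy' : y ∈ range f
    · obtain ⟨x, rfl⟩ := hy'
      exact .inl (mem_image_of_mem f hy)
    · exact .inr hy'

theorem CantorProp.of_isEmbedding (h : CantorProp X) (hf : IsEmbedding f)
    (hrange : IsMeagre (range f)ᶜ) : CantorProp Y := by
  intro A hA
  obtain ⟨C, hCnd, ⟨e⟩, hAC⟩ := h _ (hf.isInducing.not_isMeagre_preimage hrange hA)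
  let g := hf.homeomorphImage C
  refine ⟨f '' C, hf.isInducing.isNowhereDense_image hCnd, ⟨g.symm.trans e⟩, fun hm ↦ hAC ?_⟩
  exact hm.preimage_of_isOpenMap g.continuous g.isOpenMap

end Transfer

section LusinScheme

open Metric

variable {X : Type*}

theorem exists_isOpen_closure_subset_ediam_le [PseudoEMetricSpace X] {O : Set X} (hO : IsOpen O)
    {c : X} (hc : c ∈ O) {ε : ℝ≥0∞} (hε : 0 < ε) :
    ∃ V, IsOpen V ∧ c ∈ V ∧ closure V ⊆ O ∧ ediam V ≤ ε := by
  obtain ⟨r, hr, hrO⟩ := nhds_basis_closedEBall.mem_iff.1 (hO.mem_nhds hc)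
  have hpos : 0 < min r (ε / 2) := lt_min hr (ENNReal.half_pos hε.ne')
  refine ⟨eball c (min r (ε / 2)), isOpen_eball, mem_eball_self hpos, ?_, ?_⟩
  · exact (closure_minimal eball_subset_closedEBall isClosed_closedEBall).trans
      ((closedEBall_subset_closedEBall (min_le_left _ _)).trans hrO)
  · calc ediam (eball c (min r (ε / 2))) ≤ 2 * min r (ε / 2) := ediam_eball_le
      _ ≤ 2 * (ε / 2) := by gcongr; exact min_le_right _ _
      _ = ε := ENNReal.mul_div_cancel' (by simp) (by simp)

theorem exists_isOpen_nonempty_closure_subset_ediam_le [PseudoEMetricSpace X] {O : Set X}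
    (hO : IsOpen O) (hne : O.Nonempty) (q : X) {ε : ℝ≥0∞} (hε : 0 < ε) :
    ∃ V, IsOpen V ∧ V.Nonempty ∧ closure V ⊆ O ∧ ediam V ≤ ε ∧ (q ∈ O → q ∈ V) := by
  by_cases hq : q ∈ O
  · obtain ⟨V, hVo, hqV, hVO, hVd⟩ := exists_isOpen_closure_subset_ediam_le hO hq hε
    exact ⟨V, hVo, ⟨q, hqV⟩, hVO, hVd, fun _ ↦ hqV⟩
  · obtain ⟨V, hVo, hcV, hVO, hVd⟩ := exists_isOpen_closure_subset_ediam_le hO hne.some_mem hε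
    exact ⟨V, hVo, ⟨_, hcV⟩, hVO, hVd, fun h ↦ (hq h).elim⟩

theorem IsOpen.exists_disjoint_seq_dense [EMetricSpace X] [SecondCountableTopology X]
    [PerfectSpace X] {U : Set X} (hU : IsOpen U) (hne : U.Nonempty) {ε : ℝ≥0∞} (hε : 0 < ε) :
    ∃ V : ℕ → Set X, (∀ n, IsOpen (V n) ∧ (V n).Nonempty ∧ closure (V n) ⊆ U ∧ ediam (V n) ≤ ε) ∧
      Pairwise (Disjoint on V) ∧ U ⊆ closure (⋃ n, V n) := by
  obtain ⟨p, hp⟩ := hne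
  have : Nonempty X := ⟨p⟩
  obtain ⟨d, hd⟩ := TopologicalSpace.exists_dense_seq X
  -- Keeping the point `p` out of every `closure (V n)` leaves room for the next set.
  have step (F : {F : Set X // IsClosed F ∧ p ∉ F}) (n : ℕ) : ∃ V, IsOpen V ∧ V.Nonempty ∧
      closure V ⊆ (U \ F) \ {p} ∧ ediam V ≤ ε ∧ (d n ∈ (U \ F) \ {p} → d n ∈ V) :=
    exists_isOpen_nonempty_closure_subset_ediam_le ((hU.sdiff F.2.1).sdiff isClosed_singleton)
      ((dense_compl_singleton p).inter_open_nonempty _ (hU.sdiff F.2.1) ⟨p, hp, F.2.2⟩) (d n) hε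
  choose next hopen hne hsub hdiam hmem using step
  let G : ℕ → {F : Set X // IsClosed F ∧ p ∉ F} := fun n ↦ Nat.rec ⟨∅, isClosed_empty, id⟩
    (fun n F ↦ ⟨F.1 ∪ closure (next F n), F.2.1.union isClosed_closure,
      fun h ↦ h.elim F.2.2 fun h' ↦ (hsub F n h').2 rfl⟩) n
  let V : ℕ → Set X := fun n ↦ next (G n) n
  have hG_succ : ∀ n, (G (n + 1)).1 = (G n).1 ∪ closure (V n) := fun n ↦ rfl
  have hG_mono : Monotone fun n ↦ (G n).1 :=
    monotone_nat_of_le_succ fun n ↦ (hG_succ n).symm ▸ subset_union_left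
  have hG_sub : ∀ n, (G n).1 ⊆ closure (⋃ k, V k) := by
    intro n
    induction n with
    | zero => exact empty_subset _
    | succ n ih => exact (hG_succ n).symm ▸ union_subset ih (closure_mono (subset_iUnion V n))
  refine ⟨V, fun n ↦ ⟨hopen _ n, hne _ n, (hsub _ n).trans (sdiff_subset.trans sdiff_subset),
    hdiam _ n⟩, ?_, ?_⟩
  · refine pairwise_disjoint_on V |>.2 fun m n hmn ↦ disjoint_left.2 fun x hxm hxn ↦ ?_
    have hGmn : (G (m + 1)).1 ⊆ (G n).1 := hG_mono hmn
    have : x ∈ (G n).1 := hGmn (by rw [hG_succ]; exact .inr (subset_closure hxm))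
    exact (hsub _ n (subset_closure hxn)).1.2 this
  · have hdU : range d ∩ (U \ {p}) ⊆ closure (⋃ k, V k) := by
      rintro _ ⟨⟨n, rfl⟩, hdn⟩
      by_cases hG : d n ∈ (G n).1
      · exact hG_sub n hG
      · exact subset_closure (mem_iUnion.2 ⟨n, hmem _ n ⟨⟨hdn.1, hG⟩, hdn.2⟩⟩)
    calc U ⊆ closure (U ∩ {p}ᶜ) := (dense_compl_singleton p).open_subset_closure_inter hU
      _ ⊆ closure (closure ((U \ {p}) ∩ range d)) :=
          closure_mono (hd.open_subset_closure_inter (hU.sdiff isClosed_singleton))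
      _ ⊆ closure (⋃ k, V k) := by
          rw [closure_closure, inter_comm]
          exact closure_minimal hdU isClosed_closure

variable [MetricSpace X]

structure IsDenseLusinScheme (s : List ℕ → Set X) : Prop where
  isOpen : ∀ l, IsOpen (s l)
  nonempty : ∀ l, (s l).Nonempty
  nil_eq : s [] = univ
  closureAntitone : CantorScheme.ClosureAntitone s
  disjoint : CantorScheme.Disjoint s
  -- `(0 : ℝ≥0∞)⁻¹ = ∞`, so this does not constrain the root `s []`.
  ediam_le : ∀ l, ediam (s l) ≤ (l.length : ℝ≥0∞)⁻¹
  subset_closure_iUnion : ∀ l, s l ⊆ closure (⋃ a, s (a :: l))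

theorem exists_isDenseLusinScheme [SecondCountableTopology X] [PerfectSpace X] [Nonempty X] :
    ∃ s : List ℕ → Set X, IsDenseLusinScheme s := by
  choose V hV hdisj hdense using fun (U : {U : Set X // IsOpen U ∧ U.Nonempty}) (n : ℕ) ↦
    U.2.1.exists_disjoint_seq_dense U.2.2 (ε := ((n + 1 : ℕ) : ℝ≥0∞)⁻¹) (by simp)
  let S : List ℕ → {U : Set X // IsOpen U ∧ U.Nonempty} := fun l ↦
    List.rec ⟨univ, isOpen_univ, univ_nonempty⟩
      (fun a l U ↦ ⟨V U l.length a, (hV U _ a).1, (hV U _ a).2.1⟩) l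
  refine ⟨fun l ↦ (S l).1, fun l ↦ (S l).2.1, fun l ↦ (S l).2.2, rfl, fun l a ↦ ?_,
    fun l a b hab ↦ ?_, fun l ↦ ?_, fun l ↦ ?_⟩
  · exact (hV _ _ a).2.2.1
  · exact hdisj _ _ hab
  · cases l with
    | nil => simp
    | cons a l => exact (hV _ _ a).2.2.2
  · exact hdense _ _

namespace IsDenseLusinScheme

variable {s : List ℕ → Set X} (hs : IsDenseLusinScheme s)
include hs

theorem antitone_res (x : ℕ → ℕ) : Antitone fun n ↦ s (res x n) :=
  antitone_nat_of_succ_le fun _ ↦ hs.closureAntitone.antitone _ _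

theorem res_eq_of_mem {u : X} {x y : ℕ → ℕ} {n : ℕ} (hx : u ∈ s (res x n))
    (hy : u ∈ s (res y n)) : res x n = res y n := by
  induction n with
  | zero => rfl
  | succ n ih =>
    have hxy := ih (hs.antitone_res x n.le_succ hx) (hs.antitone_res y n.le_succ hy)
    rw [res_succ, hxy] at hx
    rw [res_succ] at hy
    rw [res_succ, res_succ, hxy]
    congr 1
    by_contra hne
    exact disjoint_left.1 (hs.disjoint _ hne) hx hy

theorem eq_of_forall_mem {u v : X} {x : ℕ → ℕ} (hu : ∀ n, u ∈ s (res x n))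
    (hv : ∀ n, v ∈ s (res x n)) : u = v :=
  edist_le_zero.1 <| ge_of_tendsto' ENNReal.tendsto_inv_nat_nhds_zero fun n ↦
    (edist_le_ediam_of_mem (hu n) (hv n)).trans (by simpa using hs.ediam_le (res x n))

theorem exists_continuous_forall_mem [CompleteSpace X] :
    ∃ f : (ℕ → ℕ) → X, Continuous f ∧ ∀ x n, f x ∈ s (res x n) := by
  have hdiam : CantorScheme.VanishingDiam s := fun x ↦
    tendsto_of_tendsto_of_tendsto_of_le_of_le tendsto_const_nhds
      ENNReal.tendsto_inv_nat_nhds_zero (fun _ ↦ zero_le (α := ℝ≥0∞)) fun n ↦ by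
        simpa using hs.ediam_le (res x n)
  have hdom := hs.closureAntitone.map_of_vanishingDiam hdiam hs.nonempty
  refine ⟨fun x ↦ (CantorScheme.inducedMap s).2 ⟨x, hdom ▸ mem_univ x⟩,
    hdiam.map_continuous.comp (continuous_id.subtype_mk _), fun x n ↦ CantorScheme.map_mem _ n⟩

theorem dense_iUnion_res (n : ℕ) : Dense (⋃ x : ℕ → ℕ, s (res x n)) := by
  induction n with
  | zero => simp only [res_zero, iUnion_const, hs.nil_eq, dense_univ]
  | succ n ih =>
    refine (ih.mono <| iUnion_subset fun x ↦ (hs.subset_closure_iUnion _).trans <|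
      closure_mono <| iUnion_subset fun a ↦ ?_).of_closure
    have : a :: res x n = res (update x n a) (n + 1) := by
      rw [res_succ, update_self, res_eq_res.2 fun m hm ↦ update_of_ne hm.ne _ _]
    exact this ▸ subset_iUnion (fun y ↦ s (res y (n + 1))) (update x n a)

theorem exists_forall_mem_of_mem_iInter {u : X} (hu : u ∈ ⋂ n, ⋃ x : ℕ → ℕ, s (res x n)) :
    ∃ x : ℕ → ℕ, ∀ n, u ∈ s (res x n) := by
  choose y hy using fun n ↦ mem_iUnion.1 (mem_iInter.1 hu n)
  have hres : ∀ {m n}, m ≤ n → res (y n) m = res (y m) m := fun hmn ↦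
    hs.res_eq_of_mem (hs.antitone_res _ hmn (hy _)) (hy _)
  refine ⟨fun k ↦ y (k + 1) k, fun n ↦ ?_⟩
  convert hy n using 2
  exact res_eq_res.2 fun k hk ↦ (res_eq_res.1 (hres hk) k.lt_succ_self).symm

theorem exists_isEmbedding_isMeagre_compl_range [CompleteSpace X] :
    ∃ f : (ℕ → ℕ) → X, IsEmbedding f ∧ IsMeagre (range f)ᶜ := by
  obtain ⟨f, hfc, hf⟩ := hs.exists_continuous_forall_mem
  have hpre : ∀ x n, f ⁻¹' s (res x n) = cylinder x n := fun x n ↦ by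
    ext y
    rw [cylinder_eq_res]
    exact ⟨hs.res_eq_of_mem (hf y n), fun h ↦ h ▸ hf y n⟩
  have hinj : Injective f := fun x y hxy ↦
    res_injective <| funext fun n ↦ hs.res_eq_of_mem (hf x n) (hxy ▸ hf y n)
  have hind : IsInducing f := by
    refine isInducing_iff_nhds.2 fun x ↦ le_antisymm (hfc.tendsto x).le_comap ?_
    refine (isTopologicalBasis_cylinders _).nhds_hasBasis.ge_iff.2 ?_
    rintro _ ⟨⟨y, n, rfl⟩, hx⟩
    rw [← mem_cylinder_iff_eq.1 hx, ← hpre]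
    exact preimage_mem_comap ((hs.isOpen _).mem_nhds (hf x n))
  refine ⟨f, ⟨hind, hinj⟩, ?_⟩
  rw [IsMeagre, compl_compl]
  refine mem_of_superset (countable_iInter_mem.2 fun n ↦ residual_of_dense_open
    (isOpen_iUnion fun x ↦ hs.isOpen _) (hs.dense_iUnion_res n)) fun u hu ↦ ?_
  obtain ⟨x, hx⟩ := hs.exists_forall_mem_of_mem_iInter hu
  exact mem_range.2 ⟨x, hs.eq_of_forall_mem (hf x) hx⟩

end IsDenseLusinScheme

end LusinScheme

theorem exists_isEmbedding_nat_nat_isMeagre_compl_range (X : Type*) [TopologicalSpace X]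
    [PolishSpace X] [PerfectSpace X] [Nonempty X] :
    ∃ f : (ℕ → ℕ) → X, IsEmbedding f ∧ IsMeagre (range f)ᶜ := by
  let := TopologicalSpace.upgradeIsCompletelyMetrizable X
  obtain ⟨s, hs⟩ := exists_isDenseLusinScheme (X := X)
  exact hs.exists_isEmbedding_isMeagre_compl_range

theorem stmt_11 (h : CantorProp (ℕ → ℕ)) (X : Type*) [TopologicalSpace X]
    [PolishSpace X] [Nonempty X] (hperf : Preperfect (Set.univ : Set X)) :
    CantorProp X := by
  have : PerfectSpace X := ⟨hperf⟩
  obtain ⟨f, hf, hrange⟩ := exists_isEmbedding_nat_nat_isMeagre_compl_range X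
  exact h.of_isEmbedding hf hrange
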